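/- arXiv:1111.3181 — 2 statements merged into one kernel-verified Lean document; each statement's English description precedes it below -/
import Mathlib

section
/- Let I be a nonempty finite set, let N : I → ℕ take positive values, let m = gcd_{i∈I} N_i, and let n : I → ℤ satisfy Σ_{i∈I} n_i N_i = m. Let Z be any set, u : Z → ℝ∖{0} a function, and η a real number. Then the map (z, x', t, w) ↦ (z, (t^{n_i}·x'_i)_{i∈I}, w) is a bijection from {(z, x', t, w) ∈ Z × (ℝ∖{0})^I × (ℝ∖{0}) × ℝ : w²·u(z)·t^m = η and ∏_{i∈I} (x'_i)^{N_i/m} = 1} onto {(z, x, y) ∈ Z × (ℝ∖{0})^I × ℝ : y²·u(z)·∏_{i∈I} x_i^{N_i} = η}. -/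
/-!
Put `k i = N i / m`. Bézout divided by `m` gives `∑ nᵢ kᵢ = 1`, so the monomial
`T(x) = ∏ xᵢ^{kᵢ}` satisfies `T(tⁿ · x') = t · T(x')`, and `∏ xᵢ^{Nᵢ} = T(x)^m`.
Hence `(z, x, y) ↦ (z, (T(x)^{-nᵢ} xᵢ)ᵢ, T(x), y)` inverts the map: it recovers `t` as `T(x)`
and `x'` as the point of the fibre `T = 1` over it.
-/

open Finset

section CommGroupWithZero

variable {α ι : Type*} [CommGroupWithZero α]

theorem zpow_sum₀ {t : α} (ht : t ≠ 0) (s : Finset ι) (a : ι → ℤ) :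
    t ^ (∑ i ∈ s, a i) = ∏ i ∈ s, t ^ a i := by
  classical
  induction s using Finset.induction with
  | empty => simp
  | insert j s hj ih => rw [sum_insert hj, prod_insert hj, zpow_add₀ ht, ih]

theorem prod_zpow_mul_pow {t : α} (ht : t ≠ 0) (s : Finset ι) (x : ι → α) (n : ι → ℤ)
    (k : ι → ℕ) :
    ∏ i ∈ s, (t ^ n i * x i) ^ k i = t ^ (∑ i ∈ s, n i * k i) * ∏ i ∈ s, x i ^ k i := by
  rw [zpow_sum₀ ht, ← prod_mul_distrib]
  refine prod_congr rfl fun i _ => ?_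
  rw [mul_pow, ← zpow_natCast (t ^ n i), ← zpow_mul]

variable [Fintype ι] {k : ι → ℕ} {n : ι → ℤ}

theorem bijOn_zpow_mul_of_sum_mul_eq_one (hnk : ∑ i, n i * k i = 1) (m : ℕ)
    {Z : Type*} (u : Z → α) (η : α) :
    Set.BijOn
      (fun p : Z × (ι → α) × α × α => (p.1, fun i => p.2.2.1 ^ n i * p.2.1 i, p.2.2.2))
      {p | p.2.2.2 ^ 2 * u p.1 * p.2.2.1 ^ m = η ∧
        (∀ i, p.2.1 i ≠ 0) ∧ p.2.2.1 ≠ 0 ∧ ∏ i, p.2.1 i ^ k i = 1}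
      {p | p.2.2 ^ 2 * u p.1 * (∏ i, p.2.1 i ^ k i) ^ m = η ∧ ∀ i, p.2.1 i ≠ 0} := by
  have hneg : ∑ i, -n i * k i = -1 := by simp only [neg_mul, sum_neg_distrib, hnk]
  refine Set.InvOn.bijOn (f' := fun q => (q.1, fun i => (∏ j, q.2.1 j ^ k j) ^ (-n i) * q.2.1 i,
    ∏ j, q.2.1 j ^ k j, q.2.2)) ⟨?_, ?_⟩ ?_ ?_
  · rintro ⟨z, x, t, w⟩ ⟨-, -, ht, hx⟩
    have hT : ∏ i, (t ^ n i * x i) ^ k i = t := by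
      rw [prod_zpow_mul_pow ht, hnk, hx, zpow_one, mul_one]
    simp only [hT, Prod.mk.injEq, true_and, and_true]
    funext i
    rw [← mul_assoc, ← zpow_add₀ ht, neg_add_cancel, zpow_zero, one_mul]
  · rintro ⟨z, x, y⟩ ⟨-, hx⟩
    have hT : ∏ j, x j ^ k j ≠ 0 := prod_ne_zero_iff.mpr fun j _ => pow_ne_zero _ (hx j)
    simp only [Prod.mk.injEq, true_and, and_true]
    funext i
    rw [← mul_assoc, ← zpow_add₀ hT, add_neg_cancel, zpow_zero, one_mul]
  · rintro ⟨z, x, t, w⟩ ⟨hη, hx, ht, hT⟩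
    refine ⟨?_, fun i => mul_ne_zero (zpow_ne_zero _ ht) (hx i)⟩
    simpa only [prod_zpow_mul_pow ht, hnk, hT, zpow_one, mul_one] using hη
  · rintro ⟨z, x, y⟩ ⟨hη, hx⟩
    have hT : ∏ j, x j ^ k j ≠ 0 := prod_ne_zero_iff.mpr fun j _ => pow_ne_zero _ (hx j)
    refine ⟨hη, fun i => mul_ne_zero (zpow_ne_zero _ hT) (hx i), hT, ?_⟩
    dsimp only
    rw [prod_zpow_mul_pow hT, hneg, zpow_neg_one, inv_mul_cancel₀ hT]

end CommGroupWithZero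

theorem prod_pow_eq_prod_pow_div_pow {M ι : Type*} [CommMonoid M] (s : Finset ι) (x : ι → M)
    {N : ι → ℕ} {m : ℕ} (hm : ∀ i ∈ s, m ∣ N i) :
    ∏ i ∈ s, x i ^ N i = (∏ i ∈ s, x i ^ (N i / m)) ^ m := by
  rw [← prod_pow]
  exact prod_congr rfl fun i hi => by rw [← pow_mul, Nat.div_mul_cancel (hm i hi)]

theorem sum_mul_div_eq_one_of_sum_mul_eq {ι : Type*} (s : Finset ι) {N : ι → ℕ} {m : ℕ}
    (hm0 : m ≠ 0) (hm : ∀ i ∈ s, m ∣ N i) {n : ι → ℤ} (hn : ∑ i ∈ s, n i * N i = m) :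
    ∑ i ∈ s, n i * ((N i / m : ℕ) : ℤ) = 1 := by
  have hfactor : ∑ i ∈ s, n i * N i = m * ∑ i ∈ s, n i * ((N i / m : ℕ) : ℤ) := by
    rw [mul_sum]
    refine sum_congr rfl fun i hi => ?_
    rw [mul_left_comm, ← Nat.cast_mul, Nat.mul_div_cancel' (hm i hi)]
  exact mul_left_cancel₀ (Int.natCast_ne_zero.mpr hm0) (by rw [← hfactor, hn, mul_one])

theorem stmt8_general (ι : Type) [Fintype ι] [Nonempty ι]
    (N : ι → ℕ) (hN : ∀ i, 0 < N i)
    (m : ℕ) (hm : m = Finset.univ.gcd N)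
    (nn : ι → ℤ) (hnn : ∑ i, nn i * (N i : ℤ) = (m : ℤ))
    (Z : Type) (u : Z → ℝ) (η : ℝ) :
    Set.BijOn
      (fun p : Z × (ι → ℝ) × ℝ × ℝ =>
        (p.1, fun i => p.2.2.1 ^ (nn i) * p.2.1 i, p.2.2.2))
      {p : Z × (ι → ℝ) × ℝ × ℝ | p.2.2.2 ^ 2 * u p.1 * p.2.2.1 ^ m = η ∧
        (∀ i, p.2.1 i ≠ 0) ∧ p.2.2.1 ≠ 0 ∧ ∏ i, (p.2.1 i) ^ (N i / m) = 1}
      {p : Z × (ι → ℝ) × ℝ | p.2.2 ^ 2 * u p.1 * ∏ i, (p.2.1 i) ^ (N i) = η ∧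
        ∀ i, p.2.1 i ≠ 0} := by
  have hdvd : ∀ i ∈ univ, m ∣ N i := fun i hi => hm ▸ gcd_dvd hi
  have hm0 : m ≠ 0 := by
    obtain ⟨i⟩ := ‹Nonempty ι›
    rw [hm, Ne, Finset.gcd_eq_zero_iff]
    exact fun h => (hN i).ne' (h i (mem_univ i))
  simp_rw [prod_pow_eq_prod_pow_div_pow univ _ hdvd]
  exact bijOn_zpow_mul_of_sum_mul_eq_one (sum_mul_div_eq_one_of_sum_mul_eq univ hm0 hdvd hnn) m u η

/-- The gcd-normalization change of variables for the double covers: with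
`m = gcd_{i∈I} N_i` and `Σ n_i N_i = m`, the map `(z, x', t, w) ↦ (z, (t^{n_i} x'_i)_i, w)`
is a bijection from `{w² u(z) t^m = η, ∏ (x'_i)^{N_i/m} = 1}` onto
`{y² u(z) ∏ x_i^{N_i} = η}`. -/
theorem stmt8 (ι : Type) [Fintype ι] [Nonempty ι]
    (N : ι → ℕ) (hN : ∀ i, 0 < N i)
    (m : ℕ) (hm : m = Finset.univ.gcd N)
    (nn : ι → ℤ) (hnn : ∑ i, nn i * (N i : ℤ) = (m : ℤ))
    (Z : Type) (u : Z → ℝ) (hu : ∀ z, u z ≠ 0) (η : ℝ) :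
    Set.BijOn
      (fun p : Z × (ι → ℝ) × ℝ × ℝ =>
        (p.1, fun i => p.2.2.1 ^ (nn i) * p.2.1 i, p.2.2.2))
      {p : Z × (ι → ℝ) × ℝ × ℝ | p.2.2.2 ^ 2 * u p.1 * p.2.2.1 ^ m = η ∧
        (∀ i, p.2.1 i ≠ 0) ∧ p.2.2.1 ≠ 0 ∧ ∏ i, (p.2.1 i) ^ (N i / m) = 1}
      {p : Z × (ι → ℝ) × ℝ | p.2.2 ^ 2 * u p.1 * ∏ i, (p.2.1 i) ^ (N i) = η ∧
        ∀ i, p.2.1 i ≠ 0} :=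
  stmt8_general ι N hN m hm nn hnn Z u η
end

section
/- Let R and S be polynomials in n real variables. Let f = (f₁, …, fₙ) be an n-tuple of polynomials and g a polynomial, all in n+1 variables and all with real coefficients, such that f(x, −y) = f(x, y) and g(x, −y) = −g(x, y) for all (x, y) ∈ ℂⁿ × ℂ, and suppose the map φ = (f, g) restricts to a bijection from V⁺_ℂ = {(x,y) ∈ ℂⁿ × ℂ : y² = R(x)} onto W⁺_ℂ = {(x,y) ∈ ℂⁿ × ℂ : y² = S(x)}. Then the map x ↦ f(x, 0) restricts to a bijection from the real algebraic set {x ∈ ℝⁿ : R(x) = 0} onto the real algebraic set {x ∈ ℝⁿ : S(x) = 0}. -/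
/-!
The reflection `(x, y) ↦ (x, -y)` and complex conjugation are involutions of both double covers
that commute with `φ = (f, g)`, by the parity of `f` and `g` and the reality of their
coefficients. A bijection intertwining two self-maps restricts to a bijection between their fixed
points. Taking fixed points of the reflection and then of conjugation leaves, on either side,
the real points of the cover with `y = 0`, i.e. the real zero set of `R`, resp. `S`, placed at
height `0`; on these `φ` acts by `x ↦ (f(x, 0), 0)`.
-/

open MvPolynomial Complex Function

theorem Set.BijOn.inter_fixedPoints {α β : Type*} {f : α → β} {s : Set α} {t : Set β}
    {σ : α → α} {τ : β → β} (h : Set.BijOn f s t) (hσ : Set.MapsTo σ s s)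
    (hcomm : ∀ x ∈ s, f (σ x) = τ (f x)) :
    Set.BijOn f (s ∩ fixedPoints σ) (t ∩ fixedPoints τ) := by
  refine ⟨fun x ⟨hx, hσx⟩ => ⟨h.mapsTo hx, ?_⟩, h.injOn.mono Set.inter_subset_left, ?_⟩
  · change τ (f x) = f x
    rw [← hcomm x hx, hσx.eq]
  · rintro y ⟨hy, hτy⟩
    obtain ⟨x, hx, rfl⟩ := h.surjOn hy
    exact ⟨x, ⟨hx, h.injOn (hσ hx) hx ((hcomm x hx).trans hτy.eq)⟩, rfl⟩

namespace MvPolynomial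

variable {σ : Type*}

theorem star_eval_of_im_coeff_eq_zero (p : MvPolynomial σ ℂ) (hp : ∀ m, (p.coeff m).im = 0)
    (x : σ → ℂ) : star (eval x p) = eval (star x) p := by
  have hmap : map (starRingEnd ℂ) p = p := by
    ext m
    rw [coeff_map]
    exact conj_eq_iff_im.2 (hp m)
  calc star (eval x p) = eval₂ (starRingEnd ℂ) (star x) p :=
      eval₂_comp_left (starRingEnd ℂ) (RingHom.id ℂ) x p
    _ = eval (star x) (map (starRingEnd ℂ) p) := (eval_map _ _ _).symm
    _ = eval (star x) p := by rw [hmap]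

theorem star_aeval_real (R : MvPolynomial σ ℝ) (x : σ → ℂ) :
    star (aeval x R) = aeval (star x) R :=
  comp_aeval_apply (f := x) conjAe.toAlgHom R

theorem eval_optionElim_star (p : MvPolynomial (Option σ) ℂ) (hp : ∀ m, (p.coeff m).im = 0)
    (x : σ → ℂ) (y : ℂ) :
    eval (fun v => v.elim (star y) (star x)) p = star (eval (fun v => v.elim y x) p) := by
  rw [star_eval_of_im_coeff_eq_zero p hp]
  congr 2
  funext v
  cases v <;> rfl

end MvPolynomial

section DoubleCover

variable {σ : Type*}

def doubleCover (R : MvPolynomial σ ℝ) : Set ((σ → ℂ) × ℂ) :=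
  {p | p.2 ^ 2 = aeval p.1 R}

def realZeroLocus (R : MvPolynomial σ ℝ) : Set (σ → ℂ) :=
  {x | (∀ i, (x i).im = 0) ∧ aeval x R = 0}

def sheetSwap (p : (σ → ℂ) × ℂ) : (σ → ℂ) × ℂ :=
  (p.1, -p.2)

theorem mapsTo_sheetSwap_doubleCover (R : MvPolynomial σ ℝ) :
    Set.MapsTo sheetSwap (doubleCover R) (doubleCover R) := fun p hp => by
  simpa [doubleCover, sheetSwap] using hp

theorem mapsTo_star_doubleCover (R : MvPolynomial σ ℝ) :
    Set.MapsTo star (doubleCover R) (doubleCover R) := fun p hp => by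
  change star p.2 ^ 2 = aeval (star p.1) R
  rw [← star_pow, ← star_aeval_real, hp.out]

theorem commute_star_sheetSwap : Function.Commute (star : (σ → ℂ) × ℂ → _) sheetSwap :=
  fun p => Prod.ext rfl (star_neg p.2)

theorem mem_fixedPoints_sheetSwap {p : (σ → ℂ) × ℂ} : p ∈ fixedPoints sheetSwap ↔ p.2 = 0 := by
  simp [fixedPoints, IsFixedPt, sheetSwap, Prod.ext_iff, neg_eq_self]

theorem mem_fixedPoints_star {x : σ → ℂ} : x ∈ fixedPoints star ↔ ∀ i, (x i).im = 0 := by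
  simp [fixedPoints, IsFixedPt, funext_iff, ← conj_eq_iff_im]

theorem mem_doubleCover_inter_fixedPoints {R : MvPolynomial σ ℝ} {p : (σ → ℂ) × ℂ} :
    p ∈ doubleCover R ∩ fixedPoints sheetSwap ∩ fixedPoints star ↔
      p.1 ∈ realZeroLocus R ∧ p.2 = 0 := by
  obtain ⟨x, y⟩ := p
  simp only [Set.mem_inter_iff, mem_fixedPoints_sheetSwap, doubleCover, realZeroLocus,
    ← mem_fixedPoints_star, Set.mem_ofPred_eq]
  constructor
  · rintro ⟨⟨hR, rfl⟩, hstar⟩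
    exact ⟨⟨congrArg Prod.fst hstar, by simpa using hR.symm⟩, rfl⟩
  · rintro ⟨⟨hx, hR⟩, rfl⟩
    exact ⟨⟨by simp [hR], rfl⟩, Prod.ext hx (star_zero ℂ)⟩

theorem invOn_realZeroLocus (R : MvPolynomial σ ℝ) :
    Set.InvOn Prod.fst (fun x => (x, 0)) (realZeroLocus R)
      (doubleCover R ∩ fixedPoints sheetSwap ∩ fixedPoints star) :=
  ⟨fun _ _ => rfl, fun _ hp => Prod.ext rfl (mem_doubleCover_inter_fixedPoints.1 hp).2.symm⟩

theorem bijOn_realZeroLocus (R : MvPolynomial σ ℝ) :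
    Set.BijOn (fun x => (x, 0)) (realZeroLocus R)
      (doubleCover R ∩ fixedPoints sheetSwap ∩ fixedPoints star) :=
  (invOn_realZeroLocus R).bijOn (fun _ hx => mem_doubleCover_inter_fixedPoints.2 ⟨hx, rfl⟩)
    fun _ hp => (mem_doubleCover_inter_fixedPoints.1 hp).1

variable {ι : Type*} {f : ι → MvPolynomial (Option σ) ℂ} {g : MvPolynomial (Option σ) ℂ}

variable (f g) in
noncomputable def coverMap (p : (σ → ℂ) × ℂ) : (ι → ℂ) × ℂ :=
  (fun i => eval (fun v => v.elim p.2 p.1) (f i), eval (fun v => v.elim p.2 p.1) g)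

theorem coverMap_sheetSwap
    (hf : ∀ i x y, eval (fun v => v.elim (-y) x) (f i) = eval (fun v => v.elim y x) (f i))
    (hg : ∀ x y, eval (fun v => v.elim (-y) x) g = -eval (fun v => v.elim y x) g)
    (p : (σ → ℂ) × ℂ) : coverMap f g (sheetSwap p) = sheetSwap (coverMap f g p) :=
  Prod.ext (funext fun i => hf i p.1 p.2) (hg p.1 p.2)

theorem coverMap_star (hf : ∀ i m, ((f i).coeff m).im = 0) (hg : ∀ m, (g.coeff m).im = 0)
    (p : (σ → ℂ) × ℂ) : coverMap f g (star p) = star (coverMap f g p) :=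
  Prod.ext (funext fun i => eval_optionElim_star (f i) (hf i) p.1 p.2)
    (eval_optionElim_star g hg p.1 p.2)

end DoubleCover

/-- If `φ = (f, g)` (with `f(x,−y) = f(x,y)`, `g(x,−y) = −g(x,y)`, all real coefficients)
restricts to a bijection from `V⁺_ℂ = {y² = R(x)}` onto `W⁺_ℂ = {y² = S(x)}`, then
`x ↦ f(x, 0)` restricts to a bijection from the set of real points of `{R = 0}` onto the
set of real points of `{S = 0}`. Real points of `ℂⁿ` are the points all of whose
coordinates have vanishing imaginary part; variables of the polynomials `f i` and `g`
are indexed by `Option (Fin n)`, with `none` corresponding to `y`. -/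
theorem stmt13 (n : ℕ) (R S : MvPolynomial (Fin n) ℝ)
    (f : Fin n → MvPolynomial (Option (Fin n)) ℂ)
    (g : MvPolynomial (Option (Fin n)) ℂ)
    (hfreal : ∀ i m, ((f i).coeff m).im = 0)
    (hgreal : ∀ m, (g.coeff m).im = 0)
    (hfsym : ∀ (i : Fin n) (x : Fin n → ℂ) (y : ℂ),
      eval (fun v => v.elim (-y) x) (f i) = eval (fun v => v.elim y x) (f i))
    (hgantisym : ∀ (x : Fin n → ℂ) (y : ℂ),
      eval (fun v => v.elim (-y) x) g = - eval (fun v => v.elim y x) g)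
    (hbij : Set.BijOn
      (fun p : (Fin n → ℂ) × ℂ =>
        ((fun i => eval (fun v => v.elim p.2 p.1) (f i)),
          eval (fun v => v.elim p.2 p.1) g))
      {p : (Fin n → ℂ) × ℂ | p.2 ^ 2 = aeval p.1 R}
      {p : (Fin n → ℂ) × ℂ | p.2 ^ 2 = aeval p.1 S}) :
    Set.BijOn
      (fun x : Fin n → ℂ => fun i => eval (fun v => v.elim 0 x) (f i))
      {x : Fin n → ℂ | (∀ i, (x i).im = 0) ∧ aeval x R = 0}
      {x : Fin n → ℂ | (∀ i, (x i).im = 0) ∧ aeval x S = 0} := by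
  have hcover : Set.BijOn (coverMap f g) (doubleCover R) (doubleCover S) := hbij
  have hreal := (hcover.inter_fixedPoints (mapsTo_sheetSwap_doubleCover R)
      fun p _ => coverMap_sheetSwap hfsym hgantisym p).inter_fixedPoints
    ((mapsTo_star_doubleCover R).inter_inter commute_star_sheetSwap.mapsTo_fixedPoints)
      fun p _ => coverMap_star hfreal hgreal p
  exact ((bijOn_realZeroLocus S).symm (invOn_realZeroLocus S).symm).comp
    (hreal.comp (bijOn_realZeroLocus R))
end
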